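/- Let R be a reflexive Banach space with a normalized 1-unconditional basis (r_j) and let (E_j) be Banach spaces. A bounded subset A of the direct sum X = R(E_j) is relatively weakly compact if and only if P_j(A) is relatively weakly compact in E_j for every j, where P_j : X → E_j is the j-th coordinate projection. -/

import Mathlib

open Filter Topology

def IsWeaklyCompact {E : Type*} [NormedAddCommGroup E] [NormedSpace ℝ E] (D : Set E) : Prop :=
  IsCompact (toWeakSpace ℝ E '' D)

def IsRelWeaklyCompact {E : Type*} [NormedAddCommGroup E] [NormedSpace ℝ E] (D : Set E) :
    Prop :=
  IsCompact (closure (toWeakSpace ℝ E '' D))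

/-!
The forward direction holds because each `P j` is weakly continuous. Conversely, along an
ultrafilter on a bounded set whose coordinate images are relatively weakly compact, the
coordinates converge weakly to some `y j`. Weak lower semicontinuity of the norm bounds the
partial sums of `∑ ‖y j‖ • r j`; as the unit ball of `R` is weakly compact, the basis is boundedly
complete, so `z = ∑ ι j (y j)` exists in `X`. The ultrafilter converges weakly to `z` because
every functional `f` on `X` is uniformly approximated on bounded sets by `f ∘ blockProj P ι s`
for a finite set `s` of coordinates. Otherwise there are disjointly supported blocks `w n` in the
unit ball with `ε ≤ f (w n)`; the vectors `β n = ∑ ‖P j (w n)‖ • r j` have a weak cluster point in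
`R`, which is `0` since its coordinates vanish, but which by Mazur's lemma lies in a convex set
bounded away from `0`.
-/

open Function

section WeakTopology

variable {E : Type*} [NormedAddCommGroup E] [NormedSpace ℝ E]

theorem tendsto_toWeakSpace_iff {α : Type*} {l : Filter α} {u : α → E} {y : E} :
    Tendsto (fun a => toWeakSpace ℝ E (u a)) l (𝓝 (toWeakSpace ℝ E y)) ↔
      ∀ f : StrongDual ℝ E, Tendsto (fun a => f (u a)) l (𝓝 (f y)) :=
  WeakBilin.tendsto_iff_forall_eval_tendsto _ fun _ _ h =>
    SeparatingDual.eq_iff_forall_dual_eq.mpr fun f => LinearMap.congr_fun h f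

theorem norm_le_of_forall_dual_tendsto {α : Type*} {l : Filter α} [l.NeBot] {u : α → E} {y : E}
    {C : ℝ} (hu : ∀ f : StrongDual ℝ E, Tendsto (fun a => f (u a)) l (𝓝 (f y)))
    (hC : ∀ᶠ a in l, ‖u a‖ ≤ C) : ‖y‖ ≤ C := by
  obtain ⟨g, hg, hgy⟩ := exists_dual_vector'' ℝ y
  have hgy : g y = ‖y‖ := by exact_mod_cast hgy
  refine hgy ▸ le_of_tendsto (hu g) (hC.mono fun a ha => ?_)
  calc g (u a) ≤ ‖g (u a)‖ := le_abs_self _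
    _ ≤ 1 * ‖u a‖ := g.le_of_opNorm_le hg _
    _ ≤ C := by rwa [one_mul]

theorem apply_eq_of_clusterPt_of_tendsto {α : Type*} {l : Filter α} {u : α → E} {v : E}
    (hv : ClusterPt (toWeakSpace ℝ E v) (map (fun a => toWeakSpace ℝ E (u a)) l))
    (f : StrongDual ℝ E) {L : ℝ} (hf : Tendsto (fun a => f (u a)) l (𝓝 L)) : f v = L := by
  have hf_cont : Continuous fun x : WeakSpace ℝ E => (topDualPairing ℝ E).flip x f :=
    WeakBilin.eval_continuous _ f
  have hfv := hv.map hf_cont.continuousAt tendsto_map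
  rw [Filter.map_map] at hfv
  exact eq_of_nhds_neBot (hfv.neBot.mono (inf_le_inf_left _ hf))

theorem isWeaklyCompact_closedBall (hB : IsWeaklyCompact (Metric.closedBall (0 : E) 1))
    {M : ℝ} (hM : 0 ≤ M) : IsWeaklyCompact (Metric.closedBall (0 : E) M) := by
  rw [IsWeaklyCompact, ← smul_unitClosedBall_of_nonneg hM, ← Set.image_smul, Set.image_image]
  simpa only [Set.image_image, map_smul] using hB.image (continuous_const_smul M)

theorem exists_clusterPt_toWeakSpace (hB : IsWeaklyCompact (Metric.closedBall (0 : E) 1))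
    {α : Type*} {l : Filter α} [l.NeBot] {u : α → E} {M : ℝ} (hM : 0 ≤ M)
    (hu : ∀ a, ‖u a‖ ≤ M) :
    ∃ v : E, ClusterPt (toWeakSpace ℝ E v) (map (fun a => toWeakSpace ℝ E (u a)) l) := by
  obtain ⟨_, ⟨v, -, rfl⟩, hv⟩ := (isWeaklyCompact_closedBall hB hM).exists_clusterPt
    (f := map (fun a => toWeakSpace ℝ E (u a)) l)
    (le_principal_iff.mpr <| mem_map.mpr <|
      Eventually.of_forall fun a => ⟨u a, by simpa using hu a, rfl⟩)
  exact ⟨v, hv⟩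

theorem IsRelWeaklyCompact.image {F : Type*} [NormedAddCommGroup F] [NormedSpace ℝ F]
    {A : Set E} (hA : IsRelWeaklyCompact A) (T : E →L[ℝ] F) : IsRelWeaklyCompact (T '' A) := by
  refine (IsCompact.image hA (WeakSpace.map T).continuous).closure_of_subset ?_
  rintro _ ⟨_, ⟨x, hx, rfl⟩, rfl⟩
  exact ⟨_, subset_closure ⟨x, hx, rfl⟩, rfl⟩

end WeakTopology

def IsOneUnconditional {R : Type*} [NormedAddCommGroup R] [NormedSpace ℝ R] (r : ℕ → R) :
    Prop :=
  ∀ (a c : ℕ → ℝ) (s : Finset ℕ), (∀ j, |a j| ≤ |c j|) →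
    ‖∑ j ∈ s, a j • r j‖ ≤ ‖∑ j ∈ s, c j • r j‖

namespace IsOneUnconditional

variable {R : Type*} [NormedAddCommGroup R] [NormedSpace ℝ R] {r : ℕ → R}

theorem norm_sum_le_of_subset (h : IsOneUnconditional r) {a c : ℕ → ℝ} {s t : Finset ℕ}
    (hst : s ⊆ t) (hac : ∀ j ∈ s, |a j| ≤ |c j|) :
    ‖∑ j ∈ s, a j • r j‖ ≤ ‖∑ j ∈ t, c j • r j‖ := by
  classical
  have hs : ∑ j ∈ s, a j • r j = ∑ j ∈ t, (if j ∈ s then a j else 0) • r j := by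
    simp only [ite_smul, zero_smul, Finset.sum_ite_mem, Finset.inter_eq_right.mpr hst]
  rw [hs]
  refine h _ _ t fun j => ?_
  split_ifs with hj
  · exact hac j hj
  · simp

theorem abs_le_norm_sum (h : IsOneUnconditional r) (hr : ∀ j, ‖r j‖ = 1) (a : ℕ → ℝ)
    {s : Finset ℕ} {j : ℕ} (hj : j ∈ s) : |a j| ≤ ‖∑ i ∈ s, a i • r i‖ := by
  simpa [norm_smul, hr] using
    h.norm_sum_le_of_subset (a := a) (Finset.singleton_subset_iff.mpr hj) fun _ _ => le_rfl

theorem norm_le_of_hasSum (h : IsOneUnconditional r) {a c : ℕ → ℝ} {x y : R}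
    (ha : HasSum (fun j => a j • r j) x) (hc : HasSum (fun j => c j • r j) y)
    (hac : ∀ j, |a j| ≤ |c j|) : ‖x‖ ≤ ‖y‖ :=
  le_of_tendsto_of_tendsto' ha.norm hc.norm fun s => h a c s hac

theorem linearIndependent (h : IsOneUnconditional r) (hr : ∀ j, ‖r j‖ = 1) :
    LinearIndependent ℝ r := by
  refine linearIndependent_iff'.mpr fun s a ha j hj => abs_eq_zero.mp ?_
  exact le_antisymm (by simpa [ha] using h.abs_le_norm_sum hr a hj) (abs_nonneg _)

theorem exists_coord (h : IsOneUnconditional r) (hr : ∀ j, ‖r j‖ = 1) :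
    ∃ c : ℕ → StrongDual ℝ R, ∀ i j, c j (r i) = if i = j then 1 else 0 := by
  classical
  let b := Module.Basis.span (h.linearIndependent hr)
  have hbound : ∀ j (z : Submodule.span ℝ (Set.range r)), ‖b.coord j z‖ ≤ 1 * ‖z‖ := by
    intro j z
    have hz : (z : R) = ∑ i ∈ insert j (b.repr z).support, b.repr z i • r i := by
      rw [← Finset.sum_subset (Finset.subset_insert _ _)
        fun i _ hi => by rw [Finsupp.notMem_support_iff.mp hi, zero_smul]]
      conv_lhs => rw [← b.linearCombination_repr z]
      simp [Finsupp.linearCombination_apply, Finsupp.sum, b, Module.Basis.span_apply]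
    rw [one_mul, Submodule.coe_norm, hz, b.coord_apply]
    exact h.abs_le_norm_sum hr _ (Finset.mem_insert_self _ _)
  choose c hc using fun j => exists_extension_norm_eq _ ((b.coord j).mkContinuous 1 (hbound j))
  refine ⟨c, fun i j => ?_⟩
  have hri : r i = (b i : R) := by simp [b, Module.Basis.span_apply]
  rw [hri, (hc j).1]
  simp [Finsupp.single_apply]

end IsOneUnconditional

section Coordinates

variable {R : Type*} [NormedAddCommGroup R] [NormedSpace ℝ R] {r : ℕ → R}
  {c : ℕ → StrongDual ℝ R}

theorem coord_sum_smul (hc : ∀ i j, c j (r i) = if i = j then 1 else 0) (a : ℕ → ℝ)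
    (s : Finset ℕ) (j : ℕ) : c j (∑ i ∈ s, a i • r i) = if j ∈ s then a j else 0 := by
  simp [hc]

theorem IsOneUnconditional.hasSum_coord_smul (h : IsOneUnconditional r)
    (hc : ∀ i j, c j (r i) = if i = j then 1 else 0)
    (hdense : Dense (Submodule.span ℝ (Set.range r) : Set R)) (x : R) :
    HasSum (fun j => c j x • r j) x := by
  classical
  have hcoord_span : ∀ (a : ℕ →₀ ℝ) (t : Finset ℕ),
      ∑ j ∈ t, c j (a.sum fun i b => b • r i) • r j =
        ∑ j ∈ t ∩ a.support, a j • r j := by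
    intro a t
    simp only [Finsupp.sum, coord_sum_smul hc, ite_smul, zero_smul, Finset.sum_ite_mem]
  have hproj : ∀ (t : Finset ℕ) (y : R), ‖∑ j ∈ t, c j y • r j‖ ≤ ‖y‖ := by
    intro t
    refine hdense.induction (fun y hy => ?_) (isClosed_le (by fun_prop) continuous_norm)
    obtain ⟨a, rfl⟩ := Finsupp.mem_span_range_iff_exists_finsupp.mp hy
    rw [hcoord_span]
    exact h.norm_sum_le_of_subset Finset.inter_subset_right fun _ _ => le_rfl
  refine Metric.tendsto_atTop.mpr fun ε hε => ?_
  obtain ⟨z, hz, hxz⟩ := Metric.mem_closure_iff.mp (hdense x) (ε / 2) (half_pos hε)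
  obtain ⟨a, rfl⟩ := Finsupp.mem_span_range_iff_exists_finsupp.mp hz
  refine ⟨a.support, fun t ht => ?_⟩
  set z := a.sum fun i b => b • r i
  have hzt : ∑ j ∈ t, c j z • r j = z := by
    rw [hcoord_span, Finset.inter_eq_right.mpr ht]
    rfl
  calc dist (∑ j ∈ t, c j x • r j) x = ‖∑ j ∈ t, c j (x - z) • r j + (z - x)‖ := by
        simp only [dist_eq_norm, map_sub, sub_smul, Finset.sum_sub_distrib, hzt]
        abel_nf
    _ ≤ ‖x - z‖ + ‖z - x‖ := (norm_add_le _ _).trans (add_le_add_left (hproj t _) _)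
    _ < ε := by rw [norm_sub_rev z x, ← dist_eq_norm]; linarith

theorem IsOneUnconditional.summable_of_norm_sum_le (h : IsOneUnconditional r)
    (hB : IsWeaklyCompact (Metric.closedBall (0 : R) 1))
    (hc : ∀ i j, c j (r i) = if i = j then 1 else 0)
    (hdense : Dense (Submodule.span ℝ (Set.range r) : Set R)) {a : ℕ → ℝ} {M : ℝ}
    (ha : ∀ s, ‖∑ j ∈ s, a j • r j‖ ≤ M) : Summable fun j => a j • r j := by
  obtain ⟨v, hv⟩ := exists_clusterPt_toWeakSpace hB (l := atTop)
    ((norm_nonneg _).trans (ha ∅)) ha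
  have hcv : ∀ j, c j v = a j := fun j =>
    apply_eq_of_clusterPt_of_tendsto hv (c j) <| tendsto_const_nhds.congr' <|
      (eventually_ge_atTop {j}).mono fun s hs =>
        ((coord_sum_smul hc a s j).trans (if_pos (Finset.singleton_subset_iff.mp hs))).symm
  exact ⟨v, by simpa only [hcv] using h.hasSum_coord_smul hc hdense v⟩

theorem IsOneUnconditional.eq_zero_of_clusterPt (h : IsOneUnconditional r)
    {c : ℕ → StrongDual ℝ R} (hc : ∀ i j, c j (r i) = if i = j then 1 else 0)
    (hdense : Dense (Submodule.span ℝ (Set.range r) : Set R)) {α : Type*} {l : Filter α}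
    {β : α → R} {b : R}
    (hb : ClusterPt (toWeakSpace ℝ R b) (map (fun a => toWeakSpace ℝ R (β a)) l))
    (hβ : ∀ k, ∀ᶠ a in l, c k (β a) = 0) : b = 0 := by
  have hcb : ∀ k, c k b = 0 := fun k =>
    apply_eq_of_clusterPt_of_tendsto hb (c k) <|
      tendsto_const_nhds.congr' <| (hβ k).mono fun _ ha => ha.symm
  have hb := h.hasSum_coord_smul hc hdense b
  simp only [hcb, zero_smul] at hb
  exact hb.unique hasSum_zero

end Coordinates

theorem exists_seq_pairwise_disjoint_finset {α : Type*} [DecidableEq α] {p : Finset α → Prop}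
    (h : ∀ S : Finset α, ∃ u, Disjoint u S ∧ p u) :
    ∃ U : ℕ → Finset α, Pairwise (Disjoint on U) ∧ ∀ n, p (U n) := by
  choose u hu_disj hu using h
  let G : ℕ → Finset α := fun n => Nat.rec ∅ (fun _ S => S ∪ u S) n
  have hG : Monotone G := monotone_nat_of_le_succ fun n => Finset.subset_union_left
  refine ⟨fun n => u (G n), (pairwise_disjoint_on _).mpr fun m n hmn => ?_, fun n => hu _⟩
  exact (hu_disj (G n)).mono_right (Finset.subset_union_right.trans (hG hmn)) |>.symm

theorem eventually_notMem_of_pairwise_disjoint {α : Type*} {U : ℕ → Finset α}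
    (hU : Pairwise (Disjoint on U)) (k : α) : ∀ᶠ n in atTop, k ∉ U n := by
  rw [← Nat.cofinite_eq_atTop, eventually_cofinite]
  refine Set.Subsingleton.finite fun m hm n hn => ?_
  by_contra hmn
  exact Finset.disjoint_left.mp (hU hmn) (not_not.mp hm) (not_not.mp hn)

structure IsRDirectSum {R : Type*} [NormedAddCommGroup R] [NormedSpace ℝ R] (r : ℕ → R)
    {E : ℕ → Type*} [∀ j, NormedAddCommGroup (E j)] [∀ j, NormedSpace ℝ (E j)]
    {X : Type*} [NormedAddCommGroup X] [NormedSpace ℝ X]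
    (P : ∀ j, X →L[ℝ] E j) (ι : ∀ j, E j →L[ℝ] X) : Prop where
  comp_self : ∀ j, (P j).comp (ι j) = ContinuousLinearMap.id ℝ (E j)
  comp_ne : ∀ j k, j ≠ k → (P j).comp (ι k) = 0
  hasSum : ∀ x : X, HasSum (fun j => ι j (P j x)) x
  norm_eq : ∀ x : X, ∃ s : R, HasSum (fun j => ‖P j x‖ • r j) s ∧ ‖x‖ = ‖s‖

section DirectSum

variable {R : Type*} [NormedAddCommGroup R] [NormedSpace ℝ R] {r : ℕ → R}
  {E : ℕ → Type*} [∀ j, NormedAddCommGroup (E j)] [∀ j, NormedSpace ℝ (E j)]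
  {X : Type*} [NormedAddCommGroup X] [NormedSpace ℝ X]
  {P : ∀ j, X →L[ℝ] E j} {ι : ∀ j, E j →L[ℝ] X}

def blockProj (P : ∀ j, X →L[ℝ] E j) (ι : ∀ j, E j →L[ℝ] X) (s : Finset ℕ) :
    X →L[ℝ] X :=
  ∑ j ∈ s, (ι j).comp (P j)

@[simp]
theorem blockProj_apply (s : Finset ℕ) (x : X) :
    blockProj P ι s x = ∑ j ∈ s, ι j (P j x) := by
  simp [blockProj]

theorem tendsto_apply_blockProj {α : Type*} {l : Filter α} {u : α → X} {y : ∀ j, E j}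
    (hu : ∀ j (g : StrongDual ℝ (E j)), Tendsto (fun a => g (P j (u a))) l (𝓝 (g (y j))))
    (s : Finset ℕ) (f : StrongDual ℝ X) :
    Tendsto (fun a => f (blockProj P ι s (u a))) l (𝓝 (f (∑ j ∈ s, ι j (y j)))) := by
  simpa only [blockProj_apply, map_sum, ContinuousLinearMap.comp_apply] using
    tendsto_finsetSum s fun j _ => hu j (f.comp (ι j))

namespace IsRDirectSum

theorem apply_sum (hX : IsRDirectSum r P ι) (e : ∀ j, E j) (s : Finset ℕ) (k : ℕ) :
    P k (∑ j ∈ s, ι j (e j)) = if k ∈ s then e k else 0 := by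
  classical
  have hterm : ∀ j, P k (ι j (e j)) = if j = k then e k else 0 := by
    intro j
    split_ifs with hjk
    · subst hjk
      exact congrArg (· (e j)) (hX.comp_self j)
    · exact congrArg (· (e j)) (hX.comp_ne k j (Ne.symm hjk))
  simp only [map_sum, hterm, Finset.sum_ite_eq']

theorem apply_blockProj (hX : IsRDirectSum r P ι) (s : Finset ℕ) (x : X) (k : ℕ) :
    P k (blockProj P ι s x) = if k ∈ s then P k x else 0 := by
  rw [blockProj_apply, hX.apply_sum]

theorem apply_tsum (hX : IsRDirectSum r P ι) {e : ∀ j, E j}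
    (he : Summable fun j => ι j (e j)) (k : ℕ) : P k (∑' j, ι j (e j)) = e k := by
  classical
  refine (he.hasSum.mapL (P k)).unique ?_
  convert hasSum_ite_eq k (e k) using 1
  funext j
  simpa [eq_comm] using hX.apply_sum e {j} k

theorem norm_le_of_forall_norm_apply_le (hX : IsRDirectSum r P ι) (hunc : IsOneUnconditional r)
    {x z : X} (h : ∀ j, ‖P j z‖ ≤ ‖P j x‖) : ‖z‖ ≤ ‖x‖ := by
  obtain ⟨σz, hσz, hz⟩ := hX.norm_eq z
  obtain ⟨σx, hσx, hx⟩ := hX.norm_eq x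
  rw [hz, hx]
  exact hunc.norm_le_of_hasSum hσz hσx fun j => by simpa only [abs_norm] using h j

theorem norm_blockProj_le (hX : IsRDirectSum r P ι) (hunc : IsOneUnconditional r)
    (s : Finset ℕ) (x : X) : ‖blockProj P ι s x‖ ≤ ‖x‖ :=
  hX.norm_le_of_forall_norm_apply_le hunc fun j => by
    rw [hX.apply_blockProj]
    split_ifs <;> simp

theorem norm_sum (hX : IsRDirectSum r P ι) (e : ∀ j, E j) (s : Finset ℕ) :
    ‖∑ j ∈ s, ι j (e j)‖ = ‖∑ j ∈ s, ‖e j‖ • r j‖ := by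
  obtain ⟨σ, hσ, hnorm⟩ := hX.norm_eq (∑ j ∈ s, ι j (e j))
  rw [hnorm, hσ.unique (hasSum_sum_of_ne_finset_zero fun j hj => ?_)]
  · exact congrArg norm (Finset.sum_congr rfl fun j hj => by rw [hX.apply_sum, if_pos hj])
  · rw [hX.apply_sum, if_neg hj, norm_zero, zero_smul]

theorem summable_of_summable_norm_smul [CompleteSpace X] (hX : IsRDirectSum r P ι)
    {e : ∀ j, E j} (he : Summable fun j => ‖e j‖ • r j) : Summable fun j => ι j (e j) := by
  rw [summable_iff_vanishing_norm]
  intro ε hε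
  obtain ⟨s, hs⟩ := cauchySeq_finset_iff_vanishing_norm.mp he.hasSum.cauchySeq ε hε
  exact ⟨s, fun t ht => hX.norm_sum e t ▸ hs t ht⟩

theorem exists_block (hX : IsRDirectSum r P ι) (hunc : IsOneUnconditional r)
    {f : StrongDual ℝ X} {ε : ℝ} {S : Finset ℕ}
    (hS : ε < ‖f - f.comp (blockProj P ι S)‖) :
    ∃ u : Finset ℕ, Disjoint u S ∧
      ∃ w : X, ‖w‖ ≤ 1 ∧ ε ≤ f w ∧ ∀ j ∉ u, P j w = 0 := by
  classical
  obtain ⟨x, hx1, hx⟩ := (f - f.comp (blockProj P ι S)).exists_lt_apply_of_lt_opNorm hS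
  set z := x - blockProj P ι S x
  have hPz : ∀ j, P j z = if j ∈ S then 0 else P j x := fun j => by
    simp only [z, map_sub, hX.apply_blockProj]
    split_ifs <;> simp
  have hz1 : ‖z‖ ≤ 1 := by
    refine (hX.norm_le_of_forall_norm_apply_le hunc fun j => ?_).trans hx1.le
    rw [hPz]
    split_ifs <;> simp
  have hlim : Tendsto (fun u => |f (blockProj P ι u z)|) atTop (𝓝 |f z|) :=
    ((hX.hasSum z).mapL f).abs.congr fun u => by simp [map_sum]
  obtain ⟨u, hu⟩ := (hlim.eventually_const_lt (by simpa [z] using hx)).exists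
  set v := blockProj P ι u z
  have hv1 : ‖v‖ ≤ 1 := (hX.norm_blockProj_le hunc u z).trans hz1
  have hv : ∀ j ∉ u \ S, P j v = 0 := fun j hj => by
    rw [hX.apply_blockProj, hPz]
    rw [Finset.mem_sdiff, not_and_or, not_not] at hj
    split_ifs <;> tauto
  refine ⟨u \ S, Finset.sdiff_disjoint, ?_⟩
  rcases le_total 0 (f v) with hfv | hfv
  · exact ⟨v, hv1, (abs_of_nonneg hfv ▸ hu).le, hv⟩
  · refine ⟨-v, by rwa [norm_neg], ?_, fun j hj => by rw [map_neg, hv j hj, neg_zero]⟩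
    rw [map_neg, ← abs_of_nonpos hfv]
    exact hu.le

theorem le_norm_mul_norm_of_mem_closure (hX : IsRDirectSum r P ι) (hunc : IsOneUnconditional r)
    {c : ℕ → StrongDual ℝ R} (hc : ∀ i j, c j (r i) = if i = j then 1 else 0)
    (hdense : Dense (Submodule.span ℝ (Set.range r) : Set R)) (f : StrongDual ℝ X) (ε : ℝ)
    {y : R} (hy : toWeakSpace ℝ R y ∈
      closure (toWeakSpace ℝ R '' {y | ∃ x : X, ε ≤ f x ∧ ∀ j, ‖P j x‖ ≤ c j y})) :
    ε ≤ ‖f‖ * ‖y‖ := by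
  set D := {y : R | ∃ x : X, ε ≤ f x ∧ ∀ j, ‖P j x‖ ≤ c j y}
  have hD : Convex ℝ D := by
    rintro y₁ ⟨x₁, hfx₁, hx₁⟩ y₂ ⟨x₂, hfx₂, hx₂⟩ a b ha hb hab
    refine ⟨a • x₁ + b • x₂, ?_, fun j => ?_⟩
    · calc ε = a * ε + b * ε := by rw [← add_mul, hab, one_mul]
        _ ≤ a * f x₁ + b * f x₂ := by gcongr
        _ = f (a • x₁ + b • x₂) := by simp
    · calc ‖P j (a • x₁ + b • x₂)‖ ≤ a * ‖P j x₁‖ + b * ‖P j x₂‖ := by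
            simpa [norm_smul, abs_of_nonneg ha, abs_of_nonneg hb] using
              norm_add_le (a • P j x₁) (b • P j x₂)
        _ ≤ a * c j y₁ + b * c j y₂ := by gcongr <;> simp_all
        _ = c j (a • y₁ + b • y₂) := by simp
  have hDnorm : ∀ y ∈ D, ε ≤ ‖f‖ * ‖y‖ := by
    rintro y ⟨x, hfx, hx⟩
    obtain ⟨σ, hσ, hxσ⟩ := hX.norm_eq x
    have hxy : ‖x‖ ≤ ‖y‖ :=
      hxσ ▸ hunc.norm_le_of_hasSum hσ (hunc.hasSum_coord_smul hc hdense y)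
        fun j => (abs_norm _).trans_le ((hx j).trans (le_abs_self _))
    calc ε ≤ f x := hfx
      _ ≤ ‖f‖ * ‖x‖ := (le_abs_self _).trans (f.le_opNorm x)
      _ ≤ ‖f‖ * ‖y‖ := by gcongr
  -- Mazur: the weak closure of the convex set `D` is its norm closure.
  rw [← hD.toWeakSpace_closure ℝ] at hy
  obtain ⟨y', hy', hyy'⟩ := hy
  cases (toWeakSpace ℝ R).injective hyy'
  exact closure_minimal hDnorm
    (isClosed_le continuous_const (continuous_const.mul continuous_norm)) hy'

theorem exists_norm_sub_comp_blockProj_le (hX : IsRDirectSum r P ι)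
    (hunc : IsOneUnconditional r) (hr : ∀ j, ‖r j‖ = 1)
    (hB : IsWeaklyCompact (Metric.closedBall (0 : R) 1))
    (hdense : Dense (Submodule.span ℝ (Set.range r) : Set R)) (f : StrongDual ℝ X) {ε : ℝ}
    (hε : 0 < ε) : ∃ s, ‖f - f.comp (blockProj P ι s)‖ ≤ ε := by
  classical
  by_contra! hcon
  obtain ⟨U, hU, hW⟩ :=
    exists_seq_pairwise_disjoint_finset fun S => hX.exists_block hunc (hcon S)
  choose W hW1 hWf hWU using hW
  choose β hβ hβW using fun n => hX.norm_eq (W n)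
  obtain ⟨c, hc⟩ := hunc.exists_coord hr
  have hcβ : ∀ n k, c k (β n) = ‖P k (W n)‖ := fun n k => by
    have hterm : (fun j => c k (‖P j (W n)‖ • r j)) =
        fun j => if j = k then ‖P k (W n)‖ else 0 := by
      funext j
      by_cases hjk : j = k
      · subst hjk
        simp [hc]
      · simp [hc, hjk]
    exact ((hβ n).mapL (c k)).unique (hterm ▸ hasSum_ite_eq k _)
  obtain ⟨b, hb⟩ := exists_clusterPt_toWeakSpace hB (l := atTop) zero_le_one fun n =>
    (hβW n ▸ hW1 n : ‖β n‖ ≤ 1)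
  have hb0 : b = 0 := hunc.eq_zero_of_clusterPt hc hdense hb fun k =>
    (eventually_notMem_of_pairwise_disjoint hU k).mono fun n hn => by
      rw [hcβ, hWU n k hn, norm_zero]
  have hbD := hX.le_norm_mul_norm_of_mem_closure hunc hc hdense f ε (y := b) <|
    mem_closure_iff_clusterPt.mpr <| hb.mono <| le_principal_iff.mpr <| mem_map.mpr <|
      Eventually.of_forall fun n => ⟨β n, ⟨W n, hWf n, fun j => (hcβ n j).ge⟩, rfl⟩
  rw [hb0, norm_zero, mul_zero] at hbD
  exact hε.not_ge hbD

theorem exists_norm_le_forall_apply_eq [CompleteSpace X] (hX : IsRDirectSum r P ι)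
    (hunc : IsOneUnconditional r) (hr : ∀ j, ‖r j‖ = 1)
    (hB : IsWeaklyCompact (Metric.closedBall (0 : R) 1))
    (hdense : Dense (Submodule.span ℝ (Set.range r) : Set R)) {α : Type*} {l : Filter α}
    [l.NeBot] {u : α → X} {M : ℝ} (hu : ∀ᶠ a in l, ‖u a‖ ≤ M) {y : ∀ j, E j}
    (huy : ∀ j (g : StrongDual ℝ (E j)), Tendsto (fun a => g (P j (u a))) l (𝓝 (g (y j)))) :
    ∃ z : X, ‖z‖ ≤ M ∧ ∀ j, P j z = y j := by
  have hpartial : ∀ s, ‖∑ j ∈ s, ‖y j‖ • r j‖ ≤ M := fun s => by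
    rw [← hX.norm_sum]
    exact norm_le_of_forall_dual_tendsto (tendsto_apply_blockProj huy s)
      (hu.mono fun a ha => (hX.norm_blockProj_le hunc s (u a)).trans ha)
  obtain ⟨c, hc⟩ := hunc.exists_coord hr
  have hy := hX.summable_of_summable_norm_smul (hunc.summable_of_norm_sum_le hB hc hdense hpartial)
  refine ⟨∑' j, ι j (y j), ?_, hX.apply_tsum hy⟩
  exact le_of_tendsto' hy.hasSum.norm fun s => (hX.norm_sum y s).trans_le (hpartial s)

theorem tendsto_of_forall_apply_tendsto (hX : IsRDirectSum r P ι) (hunc : IsOneUnconditional r)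
    (hr : ∀ j, ‖r j‖ = 1) (hB : IsWeaklyCompact (Metric.closedBall (0 : R) 1))
    (hdense : Dense (Submodule.span ℝ (Set.range r) : Set R)) {α : Type*} {l : Filter α}
    {u : α → X} {z : X} {M : ℝ} (hu : ∀ᶠ a in l, ‖u a‖ ≤ M) (hz : ‖z‖ ≤ M)
    (huz : ∀ j (g : StrongDual ℝ (E j)), Tendsto (fun a => g (P j (u a))) l (𝓝 (g (P j z))))
    (f : StrongDual ℝ X) : Tendsto (fun a => f (u a)) l (𝓝 (f z)) := by
  have hM : 0 ≤ M := (norm_nonneg z).trans hz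
  refine Metric.tendsto_nhds.mpr fun δ hδ => ?_
  obtain ⟨s, hs⟩ := hX.exists_norm_sub_comp_blockProj_le hunc hr hB hdense f
    (ε := δ / (3 * (M + 1))) (by positivity)
  have happrox : ∀ x, ‖x‖ ≤ M → |f x - f (blockProj P ι s x)| ≤ δ / 3 := fun x hx =>
    calc |f x - f (blockProj P ι s x)| = ‖(f - f.comp (blockProj P ι s)) x‖ := rfl
      _ ≤ δ / (3 * (M + 1)) * ‖x‖ := (f - f.comp (blockProj P ι s)).le_of_opNorm_le hs x
      _ ≤ δ / (3 * (M + 1)) * (M + 1) := by gcongr; linarith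
      _ = δ / 3 := by field_simp
  have hmid : ∀ᶠ a in l, |f (blockProj P ι s (u a)) - f (blockProj P ι s z)| < δ / 3 := by
    have := tendsto_apply_blockProj (ι := ι) huz s f
    rw [← blockProj_apply] at this
    exact Metric.tendsto_nhds.mp this _ (by positivity)
  filter_upwards [hu, hmid] with a ha hmid
  have h1 := happrox _ ha
  have h2 := happrox z hz
  rw [abs_le] at h1 h2
  rw [abs_lt] at hmid
  rw [Real.dist_eq, abs_lt]
  constructor <;> linarith

theorem isCompact_toWeakSpace [CompleteSpace X] (hX : IsRDirectSum r P ι)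
    (hunc : IsOneUnconditional r) (hr : ∀ j, ‖r j‖ = 1)
    (hB : IsWeaklyCompact (Metric.closedBall (0 : R) 1))
    (hdense : Dense (Submodule.span ℝ (Set.range r) : Set R)) (M : ℝ)
    {C : ∀ j, Set (WeakSpace ℝ (E j))} (hC : ∀ j, IsCompact (C j)) :
    IsCompact
      (toWeakSpace ℝ X '' {x | ‖x‖ ≤ M ∧ ∀ j, toWeakSpace ℝ (E j) (P j x) ∈ C j}) := by
  set K := {x : X | ‖x‖ ≤ M ∧ ∀ j, toWeakSpace ℝ (E j) (P j x) ∈ C j}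
  rw [isCompact_iff_ultrafilter_le_nhds]
  intro 𝒱 h𝒱
  set 𝒰 : Ultrafilter X := 𝒱.map (toWeakSpace ℝ X).symm
  have hK : K ∈ 𝒰 := by
    refine Ultrafilter.mem_map.mpr <| mem_of_superset (le_principal_iff.mp h𝒱) ?_
    rintro _ ⟨x, hx, rfl⟩
    simpa using hx
  have hcoord : ∀ j, ∃ y : E j, toWeakSpace ℝ (E j) y ∈ C j ∧
      ∀ g : StrongDual ℝ (E j), Tendsto (fun x => g (P j x)) 𝒰 (𝓝 (g y)) := by
    intro j
    obtain ⟨y, hyC, hy⟩ :=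
      (hC j).ultrafilter_le_nhds (𝒰.map fun x => toWeakSpace ℝ (E j) (P j x))
      (le_principal_iff.mpr (Ultrafilter.mem_map.mpr (mem_of_superset hK fun x hx => hx.2 j)))
    exact ⟨(toWeakSpace ℝ (E j)).symm y, by simpa using hyC,
      tendsto_toWeakSpace_iff.mp (by
        simpa only [LinearEquiv.apply_symm_apply, Ultrafilter.coe_map, Tendsto] using hy)⟩
  choose y hyC hy using hcoord
  have hMK : ∀ᶠ x in (𝒰 : Filter X), ‖x‖ ≤ M := mem_of_superset hK fun x hx => hx.1
  obtain ⟨z, hzM, hzy⟩ := hX.exists_norm_le_forall_apply_eq hunc hr hB hdense hMK hy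
  refine ⟨toWeakSpace ℝ X z, ⟨z, ⟨hzM, fun j => hzy j ▸ hyC j⟩, rfl⟩, ?_⟩
  have h𝒱 : (𝒱 : Filter (WeakSpace ℝ X)) = map (toWeakSpace ℝ X) 𝒰 := by
    rw [Ultrafilter.coe_map, Filter.map_map]
    exact (Filter.map_congr (Eventually.of_forall (toWeakSpace ℝ X).apply_symm_apply)).trans
      Filter.map_id |>.symm
  rw [h𝒱]
  exact tendsto_toWeakSpace_iff.mpr fun f => hX.tendsto_of_forall_apply_tendsto hunc hr hB hdense
    hMK hzM (fun j g => hzy j ▸ hy j g) f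

end IsRDirectSum

end DirectSum

theorem stmt_7_general {R : Type*} [NormedAddCommGroup R] [NormedSpace ℝ R]
    (hrefl : IsWeaklyCompact (Metric.closedBall (0 : R) 1))
    (r : ℕ → R) (hr : ∀ j, ‖r j‖ = 1)
    (hbasis : ∀ s : R, s ∈ closure (Submodule.span ℝ (Set.range r) : Set R))
    (huncond : ∀ (a c : ℕ → ℝ) (s : Finset ℕ), (∀ j, |a j| ≤ |c j|) →
      ‖∑ j ∈ s, a j • r j‖ ≤ ‖∑ j ∈ s, c j • r j‖)
    {E : ℕ → Type*} [∀ j, NormedAddCommGroup (E j)] [∀ j, NormedSpace ℝ (E j)]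
    {X : Type*} [NormedAddCommGroup X] [NormedSpace ℝ X] [CompleteSpace X]
    (P : ∀ j, X →L[ℝ] E j) (ι : ∀ j, E j →L[ℝ] X)
    (hPι : ∀ j, (P j).comp (ι j) = ContinuousLinearMap.id ℝ (E j))
    (hPιne : ∀ j k, j ≠ k → (P j).comp (ι k) = 0)
    (hexp : ∀ x : X, HasSum (fun j => ι j (P j x)) x)
    (hnormX : ∀ x : X, ∃ s : R, HasSum (fun j => ‖P j x‖ • r j) s ∧ ‖x‖ = ‖s‖)
    (A : Set X) (hA : Bornology.IsBounded A) :
    IsRelWeaklyCompact A ↔ ∀ j, IsRelWeaklyCompact (P j '' A) := by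
  refine ⟨fun hA' j => hA'.image (P j), fun hP => ?_⟩
  have hX : IsRDirectSum r P ι := ⟨hPι, hPιne, hexp, hnormX⟩
  obtain ⟨M, hM⟩ := hA.exists_norm_le
  refine (hX.isCompact_toWeakSpace huncond hr hrefl hbasis M hP).closure_of_subset ?_
  exact Set.image_mono fun x hx =>
    ⟨hM x hx, fun j => subset_closure ⟨P j x, ⟨x, hx, rfl⟩, rfl⟩⟩

/-- In the `R`-direct sum `X = R(E_j)` over a reflexive space `R` with a normalized
1-unconditional basis `(r_j)`, a bounded set `A ⊆ X` is relatively weakly compact iff each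
coordinate image `P j '' A` is relatively weakly compact in `E_j`. -/
theorem stmt_7 {R : Type*} [NormedAddCommGroup R] [NormedSpace ℝ R] [CompleteSpace R]
    (hrefl : IsWeaklyCompact (Metric.closedBall (0 : R) 1))
    (r : ℕ → R) (hr : ∀ j, ‖r j‖ = 1)
    (hbasis : ∀ s : R, s ∈ closure (Submodule.span ℝ (Set.range r) : Set R))
    (huncond : ∀ (a c : ℕ → ℝ) (s : Finset ℕ), (∀ j, |a j| ≤ |c j|) →
      ‖∑ j ∈ s, a j • r j‖ ≤ ‖∑ j ∈ s, c j • r j‖)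
    {E : ℕ → Type*} [∀ j, NormedAddCommGroup (E j)] [∀ j, NormedSpace ℝ (E j)]
    [∀ j, CompleteSpace (E j)]
    {X : Type*} [NormedAddCommGroup X] [NormedSpace ℝ X] [CompleteSpace X]
    (P : ∀ j, X →L[ℝ] E j) (ι : ∀ j, E j →L[ℝ] X)
    (hPι : ∀ j, (P j).comp (ι j) = ContinuousLinearMap.id ℝ (E j))
    (hPιne : ∀ j k, j ≠ k → (P j).comp (ι k) = 0)
    (hexp : ∀ x : X, HasSum (fun j => ι j (P j x)) x)
    (hnormX : ∀ x : X, ∃ s : R, HasSum (fun j => ‖P j x‖ • r j) s ∧ ‖x‖ = ‖s‖)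
    (A : Set X) (hA : Bornology.IsBounded A) :
    IsRelWeaklyCompact A ↔ ∀ j, IsRelWeaklyCompact (P j '' A) :=
  stmt_7_general hrefl r hr hbasis huncond P ι hPι hPιne hexp hnormX A hA
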